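/- arXiv:2603.11497 — 3 statements merged into one kernel-verified Lean document; each statement's English description precedes it below -/
import Mathlib

section
/- Let v_1, ..., v_T ∈ ℝ^K and let m ∈ {1, ..., T−1}. Then the symmetric matrix Σ_{t=1}^{T−m}(v_t v_{t+m}′ + v_{t+m} v_t′) + 2 Σ_{t=1}^T v_t v_t′ is positive semidefinite; indeed it dominates Σ_{t=1}^{T−m} (v_t + v_{t+m})(v_t + v_{t+m})′ in the psd order. -/
open Finset Matrix

/-
Expanding (v_t + v_{t+m})(v_t + v_{t+m})′ shows that the difference of the two matrices is
S − Σ_{t<T−m} v_t v_t′ plus S − Σ_{t<T−m} v_{t+m} v_{t+m}′, where S = Σ_{t<T} v_t v_t′.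
Both lagged index ranges lie in {0, …, T−1}, so each difference is a sum of rank-one psd
matrices v_t v_t′ over the omitted indices.
-/

theorem Matrix.posSemidef_sum_sub_sum_of_subset {ι n R : Type*} [Fintype n] [Ring R]
    [PartialOrder R] [StarRing R] [AddLeftMono R] [DecidableEq ι] {s t : Finset ι}
    (hst : s ⊆ t) {f : ι → Matrix n n R} (hf : ∀ i ∈ t, (f i).PosSemidef) :
    (∑ i ∈ t, f i - ∑ i ∈ s, f i).PosSemidef := by
  rw [← sum_sdiff hst, add_sub_cancel_right]
  exact posSemidef_sum _ fun i hi => hf i (sdiff_subset hi)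

theorem Matrix.posSemidef_vecMulVec_self {n R : Type*} [Finite n] [CommRing R] [PartialOrder R]
    [StarRing R] [StarOrderedRing R] [TrivialStar R] (a : n → R) :
    (vecMulVec a a).PosSemidef := by
  simpa using posSemidef_vecMulVec_self_star a

theorem stmt_8_general (K T m : ℕ) (v : ℕ → Fin K → ℝ) :
    Matrix.PosSemidef
      ((∑ t ∈ Finset.range (T - m),
          (Matrix.vecMulVec (v t) (v (t + m)) + Matrix.vecMulVec (v (t + m)) (v t)))
        + 2 • ∑ t ∈ Finset.range T, Matrix.vecMulVec (v t) (v t)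
        - ∑ t ∈ Finset.range (T - m),
            Matrix.vecMulVec (v t + v (t + m)) (v t + v (t + m))) ∧
    Matrix.PosSemidef
      ((∑ t ∈ Finset.range (T - m),
          (Matrix.vecMulVec (v t) (v (t + m)) + Matrix.vecMulVec (v (t + m)) (v t)))
        + 2 • ∑ t ∈ Finset.range T, Matrix.vecMulVec (v t) (v t)) := by
  set S := ∑ t ∈ range T, vecMulVec (v t) (v t)
  have hsq : ∀ t, (vecMulVec (v t) (v t)).PosSemidef := fun t => posSemidef_vecMulVec_self _
  have hlag : (range (T - m)).map (addRightEmbedding m) ⊆ range T := by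
    intro t ht
    simp only [mem_map, mem_range, addRightEmbedding_apply] at ht ⊢
    omega
  have hdiff : ((∑ t ∈ range (T - m),
      (vecMulVec (v t) (v (t + m)) + vecMulVec (v (t + m)) (v t))) + 2 • S
      - ∑ t ∈ range (T - m), vecMulVec (v t + v (t + m)) (v t + v (t + m))).PosSemidef := by
    have hexpand : (∑ t ∈ range (T - m),
        (vecMulVec (v t) (v (t + m)) + vecMulVec (v (t + m)) (v t))) + 2 • S
        - ∑ t ∈ range (T - m), vecMulVec (v t + v (t + m)) (v t + v (t + m))
        = (S - ∑ t ∈ range (T - m), vecMulVec (v t) (v t))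
          + (S - ∑ t ∈ (range (T - m)).map (addRightEmbedding m), vecMulVec (v t) (v t)) := by
      simp only [sum_map, addRightEmbedding_apply, add_vecMulVec, vecMulVec_add,
        sum_add_distrib, two_smul]
      abel
    rw [hexpand]
    exact (posSemidef_sum_sub_sum_of_subset (range_subset_range.2 (Nat.sub_le T m))
      fun t _ => hsq t).add (posSemidef_sum_sub_sum_of_subset hlag fun t _ => hsq t)
  refine ⟨hdiff, ?_⟩
  simpa only [sub_add_cancel] using hdiff.add
    (posSemidef_sum (range (T - m)) fun t _ => posSemidef_vecMulVec_self (v t + v (t + m)))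

theorem stmt_8 (K T m : ℕ) (hm1 : 1 ≤ m) (hm : m ≤ T - 1) (v : ℕ → Fin K → ℝ) :
    Matrix.PosSemidef
      ((∑ t ∈ Finset.range (T - m),
          (Matrix.vecMulVec (v t) (v (t + m)) + Matrix.vecMulVec (v (t + m)) (v t)))
        + 2 • ∑ t ∈ Finset.range T, Matrix.vecMulVec (v t) (v t)
        - ∑ t ∈ Finset.range (T - m),
            Matrix.vecMulVec (v t + v (t + m)) (v t + v (t + m))) ∧
    Matrix.PosSemidef
      ((∑ t ∈ Finset.range (T - m),
          (Matrix.vecMulVec (v t) (v (t + m)) + Matrix.vecMulVec (v (t + m)) (v t)))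
        + 2 • ∑ t ∈ Finset.range T, Matrix.vecMulVec (v t) (v t)) :=
  stmt_8_general K T m v
end

section
/- Let ω : {1,…,M} → [0, ∞) and v_1, ..., v_T ∈ ℝ^K with M ≤ T−1. Then Σ_{m=1}^M ω(m) [ Σ_{t=1}^{T−m}(v_t v_{t+m}′ + v_{t+m} v_t′) + 2 Σ_{t=1}^T v_t v_t′ ] is positive semidefinite. -/
/-!
Writing `P a = a a′`, each cross term is a polarization,
`v_t v_{t+m}′ + v_{t+m} v_t′ = P (v_t + v_{t+m}) - P v_t - P v_{t+m}`.
Summed over `t < T - m`, the subtracted terms are each dominated in the Loewner order by one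
copy of `∑_{t<T} P v_t`, so adding two copies leaves a sum of the positive semidefinite
matrices `P (v_t + v_{t+m})`. Nonnegative weights `ω m` preserve this.
-/

open Matrix Finset
open scoped MatrixOrder

theorem Finset.sum_range_sub_shift_le_sum_range {α : Type*} [AddCommMonoid α] [PartialOrder α]
    [IsOrderedAddMonoid α] {x : ℕ → α} (hx : ∀ t, 0 ≤ x t) (T m : ℕ) :
    ∑ t ∈ range (T - m), x (t + m) ≤ ∑ t ∈ range T, x t := by
  refine (sum_map (range (T - m)) (addRightEmbedding m) x).symm.trans_le <|
    sum_le_sum_of_subset_of_nonneg (fun t ht => ?_) fun t _ _ => hx t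
  simp only [mem_map, mem_range, addRightEmbedding_apply] at ht ⊢
  omega

theorem Matrix.vecMulVec_add_vecMulVec_swap {α n : Type*} [CommRing α] (a b : n → α) :
    vecMulVec a b + vecMulVec b a = vecMulVec (a + b) (a + b) - vecMulVec a a - vecMulVec b b := by
  simp only [add_vecMulVec, vecMulVec_add]
  abel

theorem Matrix.vecMulVec_self_nonneg {n : Type*} [Finite n] (a : n → ℝ) : 0 ≤ vecMulVec a a :=
  (posSemidef_vecMulVec_self_star a).nonneg

theorem Matrix.posSemidef_sum_lag_add_two_smul_sum {n : Type*} [Finite n] (T m : ℕ)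
    (v : ℕ → n → ℝ) :
    ((∑ t ∈ range (T - m), (vecMulVec (v t) (v (t + m)) + vecMulVec (v (t + m)) (v t)))
      + 2 • ∑ t ∈ range T, vecMulVec (v t) (v t)).PosSemidef := by
  set P : (n → ℝ) → Matrix n n ℝ := fun a => vecMulVec a a
  rw [← nonneg_iff_posSemidef]
  calc (0 : Matrix n n ℝ)
      ≤ ∑ t ∈ range (T - m), P (v t + v (t + m))
        + (∑ t ∈ range T, P (v t) - ∑ t ∈ range (T - m), P (v t))
        + (∑ t ∈ range T, P (v t) - ∑ t ∈ range (T - m), P (v (t + m))) := by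
        refine add_nonneg (add_nonneg (sum_nonneg fun t _ => vecMulVec_self_nonneg _) ?_) ?_
        · exact sub_nonneg.2 <| sum_le_sum_of_subset_of_nonneg
            (range_subset_range.2 (Nat.sub_le T m)) fun t _ _ => vecMulVec_self_nonneg _
        · exact sub_nonneg.2 <|
            sum_range_sub_shift_le_sum_range (fun t => vecMulVec_self_nonneg (v t)) T m
    _ = _ := by
        simp only [vecMulVec_add_vecMulVec_swap, sum_sub_distrib, two_smul, P]
        abel

theorem stmt_9_general (K T M : ℕ) (ω : ℕ → ℝ) (hω : ∀ m, 0 ≤ ω m)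
    (v : ℕ → Fin K → ℝ) :
    Matrix.PosSemidef
      (∑ m ∈ Finset.Icc 1 M, ω m •
        ((∑ t ∈ Finset.range (T - m),
            (Matrix.vecMulVec (v t) (v (t + m)) + Matrix.vecMulVec (v (t + m)) (v t)))
          + 2 • ∑ t ∈ Finset.range T, Matrix.vecMulVec (v t) (v t))) :=
  posSemidef_sum _ fun m _ => (posSemidef_sum_lag_add_two_smul_sum T m v).smul (hω m)

theorem stmt_9 (K T M : ℕ) (hM : M ≤ T - 1) (ω : ℕ → ℝ) (hω : ∀ m, 0 ≤ ω m)
    (v : ℕ → Fin K → ℝ) :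
    Matrix.PosSemidef
      (∑ m ∈ Finset.Icc 1 M, ω m •
        ((∑ t ∈ Finset.range (T - m),
            (Matrix.vecMulVec (v t) (v (t + m)) + Matrix.vecMulVec (v (t + m)) (v t)))
          + 2 • ∑ t ∈ Finset.range T, Matrix.vecMulVec (v t) (v t))) :=
  stmt_9_general K T M ω hω v
end

section
/- Let Y_1, ..., Y_n be ℝ^v-valued square-integrable random vectors partitioned into clusters by g : {1,…,n} → {1,…,G} and by t : {1,…,n} → {1,…,T}. Then Σ_i Σ_{j: g(j)=g(i)} E[Y_i Y_j′] + Σ_i Σ_{j: t(j)=t(i)} E[Y_i Y_j′] − [ Σ_i Σ_{j: g(j)=g(i)} Cov(Y_i, Y_j) + Σ_i Σ_{j: t(j)=t(i)} Cov(Y_i, Y_j) − Σ_i Σ_{j: g(j)=g(i), t(j)=t(i)} Cov(Y_i, Y_j) ] is positive semidefinite. -/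
/-!
Since `E[Y_i Y_j'] = Cov(Y_i, Y_j) + E Y_i (E Y_j)'`, the matrix in question is
`∑_k m_k m_k' + ∑_l m_l m_l' + ∑_{(k,l)} Cov(S_{kl}, S_{kl})`, where `m_k` is the sum of the means
over the `k`-th cluster (of `g`, resp. of `t`) and `S_{kl}` is the sum of the vectors in the
intersection of the `g`-cluster `k` with the `t`-cluster `l`. Each summand is positive semidefinite.
-/

open MeasureTheory

/-- Uncentered second moment matrix `E[X Y']` of two random vectors. -/
noncomputable def m2Mat {Ω : Type*} [MeasurableSpace Ω] (μ : Measure Ω) {v : ℕ}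
    (X Y : Ω → Fin v → ℝ) : Matrix (Fin v) (Fin v) ℝ :=
  Matrix.of fun a b => ∫ ω, X ω a * Y ω b ∂μ

/-- Covariance matrix `Cov(X, Y) = E[(X - EX)(Y - EY)']` of two random vectors. -/
noncomputable def covMat {Ω : Type*} [MeasurableSpace Ω] (μ : Measure Ω) {v : ℕ}
    (X Y : Ω → Fin v → ℝ) : Matrix (Fin v) (Fin v) ℝ :=
  Matrix.of fun a b =>
    ∫ ω, (X ω a - ∫ x, X x a ∂μ) * (Y ω b - ∫ x, Y x b ∂μ) ∂μ

open ProbabilityTheory Matrix Finset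

section Clustering

variable {ι κ : Type*} [Fintype ι] [DecidableEq κ]

lemma sum_sum_filter_eq_sum_image {M : Type*} [AddCommMonoid M] (c : ι → κ) (F : ι → ι → M) :
    ∑ i, ∑ j ∈ univ.filter (fun j => c j = c i), F i j
      = ∑ k ∈ univ.image c, ∑ i ∈ univ.filter (fun i => c i = k),
          ∑ j ∈ univ.filter (fun j => c j = k), F i j := by
  rw [← sum_fiberwise_of_maps_to (g := c) (t := univ.image c)
    fun i _ => mem_image_of_mem c (mem_univ i)]
  refine sum_congr rfl fun k _ => sum_congr rfl fun i hi => ?_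
  rw [(mem_filter.1 hi).2]

variable {m R : Type*} [Ring R] [PartialOrder R] [StarRing R] [AddLeftMono R]

lemma posSemidef_sum_sum_filter_eq (c : ι → κ) (F : ι → ι → Matrix m m R)
    (hF : ∀ s : Finset ι, (∑ i ∈ s, ∑ j ∈ s, F i j).PosSemidef) :
    (∑ i, ∑ j ∈ univ.filter (fun j => c j = c i), F i j).PosSemidef := by
  rw [sum_sum_filter_eq_sum_image]
  exact posSemidef_sum _ fun k _ => hF _

end Clustering

lemma sum_sum_vecMulVec {ι m R : Type*} [NonUnitalNonAssocSemiring R] (s : Finset ι)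
    (u w : ι → m → R) :
    ∑ i ∈ s, ∑ j ∈ s, vecMulVec (u i) (w j) = vecMulVec (∑ i ∈ s, u i) (∑ j ∈ s, w j) := by
  ext a b
  simp only [Matrix.sum_apply, vecMulVec_apply, Finset.sum_apply, sum_mul_sum]

lemma posSemidef_sum_sum_vecMulVec {ι m R : Type*} [Finite m] [Ring R] [PartialOrder R]
    [StarRing R] [StarOrderedRing R] [TrivialStar R] (s : Finset ι) (u : ι → m → R) :
    (∑ i ∈ s, ∑ j ∈ s, vecMulVec (u i) (u j)).PosSemidef := by
  have h := posSemidef_vecMulVec_self_star (∑ i ∈ s, u i)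
  rwa [star_trivial, ← sum_sum_vecMulVec] at h

section Moments

variable {Ω : Type*} [MeasurableSpace Ω] {μ : Measure Ω} {v : ℕ}

noncomputable def meanVec (μ : Measure Ω) (X : Ω → Fin v → ℝ) : Fin v → ℝ :=
  fun a => ∫ ω, X ω a ∂μ

lemma covMat_apply (X Y : Ω → Fin v → ℝ) (a b : Fin v) :
    covMat μ X Y a b = cov[fun ω => X ω a, fun ω => Y ω b; μ] := rfl

lemma m2Mat_eq_covMat_add_vecMulVec [IsProbabilityMeasure μ] {X Y : Ω → Fin v → ℝ}
    (hX : ∀ a, MemLp (fun ω => X ω a) 2 μ) (hY : ∀ b, MemLp (fun ω => Y ω b) 2 μ) :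
    m2Mat μ X Y = covMat μ X Y + vecMulVec (meanVec μ X) (meanVec μ Y) := by
  ext a b
  simp [covMat_apply, covariance_eq_sub (hX a) (hY b), m2Mat, meanVec, vecMulVec_apply]

lemma sum_sum_covMat [IsFiniteMeasure μ] {ι ι' : Type*} {X : ι → Ω → Fin v → ℝ}
    {Y : ι' → Ω → Fin v → ℝ} {s : Finset ι} {t : Finset ι'}
    (hX : ∀ i ∈ s, ∀ a, MemLp (fun ω => X i ω a) 2 μ)
    (hY : ∀ j ∈ t, ∀ b, MemLp (fun ω => Y j ω b) 2 μ) :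
    ∑ i ∈ s, ∑ j ∈ t, covMat μ (X i) (Y j) = covMat μ (∑ i ∈ s, X i) (∑ j ∈ t, Y j) := by
  ext a b
  simp only [Matrix.sum_apply, covMat_apply, Finset.sum_apply]
  rw [covariance_fun_sum_fun_sum' (fun i hi => hX i hi a) (fun j hj => hY j hj b)]

lemma covMat_self_posSemidef [IsFiniteMeasure μ] {X : Ω → Fin v → ℝ}
    (hX : ∀ a, MemLp (fun ω => X ω a) 2 μ) : (covMat μ X X).PosSemidef := by
  refine .of_dotProduct_mulVec_nonneg ?_ fun x => ?_
  · ext a b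
    exact covariance_comm _ _
  · have hquad : star x ⬝ᵥ covMat μ X X *ᵥ x
        = cov[fun ω => ∑ a, x a * X ω a, fun ω => ∑ b, x b * X ω b; μ] := by
      rw [covariance_fun_sum_fun_sum' (fun a _ => (hX a).const_mul (x a))
        (fun b _ => (hX b).const_mul (x b))]
      simp only [covariance_const_mul_left, covariance_const_mul_right, dotProduct, mulVec,
        star_trivial, mul_sum, covMat_apply]
      exact sum_congr rfl fun a _ => sum_congr rfl fun b _ => by ring
    rw [hquad]
    exact integral_nonneg fun ω => mul_self_nonneg _

lemma posSemidef_sum_sum_covMat [IsFiniteMeasure μ] {ι : Type*} {X : ι → Ω → Fin v → ℝ}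
    {s : Finset ι} (hX : ∀ i ∈ s, ∀ a, MemLp (fun ω => X i ω a) 2 μ) :
    (∑ i ∈ s, ∑ j ∈ s, covMat μ (X i) (X j)).PosSemidef := by
  have hsum : ∀ a, MemLp (fun ω => (∑ i ∈ s, X i) ω a) 2 μ := fun a => by
    simpa only [Finset.sum_apply] using memLp_finsetSum s fun i hi => hX i hi a
  rw [sum_sum_covMat hX hX]
  exact covMat_self_posSemidef hsum

end Moments

theorem stmt_11 {Ω : Type*} [MeasurableSpace Ω] (μ : Measure Ω) [IsProbabilityMeasure μ]
    (n G T v : ℕ) (Y : Fin n → Ω → Fin v → ℝ)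
    (hmem : ∀ i, ∀ a : Fin v, MemLp (fun ω => Y i ω a) 2 μ)
    (g : Fin n → Fin G) (t : Fin n → Fin T) :
    Matrix.PosSemidef
      ((∑ i, ∑ j ∈ Finset.univ.filter (fun j => g j = g i), m2Mat μ (Y i) (Y j))
        + (∑ i, ∑ j ∈ Finset.univ.filter (fun j => t j = t i), m2Mat μ (Y i) (Y j))
        - ((∑ i, ∑ j ∈ Finset.univ.filter (fun j => g j = g i), covMat μ (Y i) (Y j))
          + (∑ i, ∑ j ∈ Finset.univ.filter (fun j => t j = t i), covMat μ (Y i) (Y j))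
          - (∑ i, ∑ j ∈ Finset.univ.filter (fun j => g j = g i ∧ t j = t i),
              covMat μ (Y i) (Y j)))) := by
  have hgt := posSemidef_sum_sum_filter_eq (fun i => (g i, t i)) _
    fun _ => posSemidef_sum_sum_covMat fun i _ => hmem i
  simp only [Prod.mk.injEq] at hgt
  have hg := posSemidef_sum_sum_filter_eq g _ fun s => posSemidef_sum_sum_vecMulVec s
    fun i => meanVec μ (Y i)
  have ht := posSemidef_sum_sum_filter_eq t _ fun s => posSemidef_sum_sum_vecMulVec s
    fun i => meanVec μ (Y i)
  simp only [m2Mat_eq_covMat_add_vecMulVec (hmem _) (hmem _), sum_add_distrib]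
  convert (hg.add ht).add hgt using 1
  abel
end
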